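/- arXiv:1211.7131 — 6 statements merged into one kernel-verified Lean document; each statement's English description precedes it below -/
import Mathlib

section
/- In R₂ the following identities hold: u₀^{q+1} = u₁·u₁* − d₂₂·d₂₂*; u₁^q = c₂₁·u₀^q − d₂₂^{q−1}·u₁*; and (u₁*)^q = c₂₁*·u₀^q − (d₂₂*)^{q−1}·u₁. -/
open MvPolynomial

noncomputable section

abbrev R2 (F : Type) [Field F] : Type := MvPolynomial (Fin 4) F

/-- The action of `A ∈ GL₂(F)` on `R₂ = F[x₁,x₂,y₁,y₂]` (variables `X 0, X 1, X 2, X 3`). -/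
def act {F : Type} [Field F] (A : GL (Fin 2) F) : R2 F →ₐ[F] R2 F :=
  aeval ![C ((A.val.det)⁻¹ * A.val 1 1) * X 0 - C ((A.val.det)⁻¹ * A.val 1 0) * X 1,
          C ((A.val.det)⁻¹ * A.val 0 0) * X 1 - C ((A.val.det)⁻¹ * A.val 0 1) * X 0,
          C (A.val 0 0) * X 2 + C (A.val 0 1) * X 3,
          C (A.val 1 0) * X 2 + C (A.val 1 1) * X 3]

/-- The invariant ring `R₂^G` for a subgroup `G ≤ GL₂(F)`. -/
def invariantRing {F : Type} [Field F] (G : Subgroup (GL (Fin 2) F)) : Subalgebra F (R2 F) where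
  carrier := {f | ∀ A ∈ G, act A f = f}
  mul_mem' := fun hf hg A hA => by rw [map_mul, hf A hA, hg A hA]
  add_mem' := fun hf hg A hA => by rw [map_add, hf A hA, hg A hA]
  one_mem' := fun A _ => map_one (act A)
  zero_mem' := fun A _ => map_zero (act A)
  algebraMap_mem' := fun r A _ => (act A).commutes r

/-- `SL₂(F)` as a subgroup of `GL₂(F)`. -/
def SL2 (F : Type) [Field F] : Subgroup (GL (Fin 2) F) where
  carrier := {A | A.val.det = 1}
  one_mem' := by simp
  mul_mem' := by
    intro a b ha hb
    simp only [Set.mem_setOf_eq, Units.val_mul, Matrix.det_mul] at *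
    rw [ha, hb, mul_one]
  inv_mem' := by
    intro a ha
    have h : ((a⁻¹).val * a.val).det = 1 := by
      rw [← Units.val_mul, inv_mul_cancel, Units.val_one, Matrix.det_one]
    simp only [Matrix.det_mul] at h
    rw [Set.mem_setOf_eq] at ha ⊢
    rw [ha, mul_one] at h
    exact h

/-- `P₂(F)`: upper triangular matrices in `SL₂(F)` with 1's on the diagonal. -/
def P2 (F : Type) [Field F] : Subgroup (GL (Fin 2) F) where
  carrier := {A | A.val 0 0 = 1 ∧ A.val 1 1 = 1 ∧ A.val 1 0 = 0}
  one_mem' := by simp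
  mul_mem' := by
    intro a b ha hb
    obtain ⟨ha1, ha2, ha3⟩ := ha
    obtain ⟨hb1, hb2, hb3⟩ := hb
    refine ⟨?_, ?_, ?_⟩ <;>
      simp [Units.val_mul, Matrix.mul_apply, Fin.sum_univ_two, ha1, ha2, ha3, hb1, hb2, hb3]
  inv_mem' := by
    intro a ha
    obtain ⟨ha1, ha2, ha3⟩ := ha
    have hdet : a.val.det = 1 := by
      rw [Matrix.det_fin_two, ha1, ha2, ha3]; ring
    have hinv : (a⁻¹).val = a.val⁻¹ := by
      simp [Matrix.coe_units_inv]
    refine ⟨?_, ?_, ?_⟩ <;>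
      simp [hinv, Matrix.inv_def, hdet, Matrix.adjugate_fin_two, ha1, ha2, ha3]

def d22 (F : Type) [Field F] (q : ℕ) : R2 F := X 1 * X 0 ^ q - X 0 * X 1 ^ q
def d22s (F : Type) [Field F] (q : ℕ) : R2 F := X 2 * X 3 ^ q - X 3 * X 2 ^ q
def u0 (F : Type) [Field F] : R2 F := X 0 * X 2 + X 1 * X 3
def u1 (F : Type) [Field F] (q : ℕ) : R2 F := X 0 ^ q * X 2 + X 1 ^ q * X 3
def u1s (F : Type) [Field F] (q : ℕ) : R2 F := X 0 * X 2 ^ q + X 1 * X 3 ^ q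
def phi1 (F : Type) [Field F] : R2 F := X 0
def phi2 (F : Type) [Field F] (q : ℕ) : R2 F := X 1 ^ q - X 1 * X 0 ^ (q - 1)
def phi1s (F : Type) [Field F] : R2 F := X 3
def phi2s (F : Type) [Field F] (q : ℕ) : R2 F := X 2 ^ q - X 2 * X 3 ^ (q - 1)

/-- the identities (3.2)–(3.4):
`u₀^{q+1} = u₁u₁* − d₂₂d₂₂*`, `u₁^q = c₂₁u₀^q − d₂₂^{q−1}u₁*`,
`(u₁*)^q = c₂₁*u₀^q − (d₂₂*)^{q−1}u₁`. -/
theorem stmt_5 (q : ℕ) (hq : IsPrimePow q) (F : Type) [Field F] [Fintype F]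
    (hF : Fintype.card F = q)
    (c21 c21s : R2 F)
    (hc21 : d22 F q * c21 = X 1 * X 0 ^ (q ^ 2) - X 0 * X 1 ^ (q ^ 2))
    (hc21s : d22s F q * c21s = X 2 * X 3 ^ (q ^ 2) - X 3 * X 2 ^ (q ^ 2)) :
    u0 F ^ (q + 1) = u1 F q * u1s F q - d22 F q * d22s F q ∧
    u1 F q ^ q = c21 * u0 F ^ q - d22 F q ^ (q - 1) * u1s F q ∧
    u1s F q ^ q = c21s * u0 F ^ q - d22s F q ^ (q - 1) * u1 F q := by

  obtain ⟨p, n, hp, hn, rfl⟩ := hq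
  have hp' : p.Prime := hp.nat_prime
  haveI : Fact p.Prime := ⟨hp'⟩
  -- characteristic of F is p
  have hdvd : ringChar F ∣ p ^ n := by
    rw [← hF]
    exact (CharP.cast_eq_zero_iff F (ringChar F) _).mp (FiniteField.cast_card_eq_zero F)
  have hr : (ringChar F).Prime := CharP.char_is_prime F (ringChar F)
  have hrp : ringChar F = p :=
    (Nat.prime_dvd_prime_iff_eq hr hp').mp (hr.dvd_of_dvd_pow hdvd)
  haveI hFp : CharP F p := hrp ▸ ringChar.charP F
  haveI : CharP (R2 F) p := charP_of_injective_ringHom (C_injective (Fin 4) F) p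
  have hq1 : 1 ≤ p ^ n := Nat.one_le_pow _ _ hp'.pos
  have hqne1 : p ^ n ≠ 1 := Nat.ne_of_gt (Nat.one_lt_pow hn.ne' hp'.one_lt)
  have frob_add : ∀ a b : R2 F, (a + b) ^ p ^ n = a ^ p ^ n + b ^ p ^ n := fun a b =>
    add_pow_char_pow ..
  have frob_sub : ∀ a b : R2 F, (a - b) ^ p ^ n = a ^ p ^ n - b ^ p ^ n := fun a b =>
    sub_pow_char_pow ..
  -- nonvanishing of d22, d22s
  have hXq : (Polynomial.X : Polynomial F) - Polynomial.X ^ p ^ n ≠ 0 := by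
    intro h
    have h1 := congrArg (fun f => Polynomial.coeff f 1) h
    simp [Polynomial.coeff_X_pow, hqne1.symm] at h1
  have hd22 : d22 F (p ^ n) ≠ 0 := by
    intro h
    apply hXq
    have := congrArg (MvPolynomial.aeval (R := F) (S₁ := Polynomial F) ![1, Polynomial.X, 0, 0]) h
    simpa [d22] using this
  have hd22s : d22s F (p ^ n) ≠ 0 := by
    intro h
    apply hXq
    have := congrArg (MvPolynomial.aeval (R := F) (S₁ := Polynomial F) ![0, 0, 1, Polynomial.X]) h
    have h2 : (Polynomial.X ^ p ^ n - Polynomial.X : Polynomial F) = 0 := by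
      simpa [d22s] using this
    rw [← neg_eq_zero, neg_sub]
    exact h2
  -- frobenius computations
  have hu0q : u0 F ^ p ^ n = X 0 ^ p ^ n * X 2 ^ p ^ n + X 1 ^ p ^ n * X 3 ^ p ^ n := by
    rw [u0, frob_add, mul_pow, mul_pow]
  have hu1q : u1 F (p ^ n) ^ p ^ n
      = X 0 ^ (p ^ n) ^ 2 * X 2 ^ p ^ n + X 1 ^ (p ^ n) ^ 2 * X 3 ^ p ^ n := by
    rw [u1, frob_add, mul_pow, mul_pow, ← pow_mul, ← pow_mul, ← sq]
  have hu1sq : u1s F (p ^ n) ^ p ^ n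
      = X 0 ^ p ^ n * X 2 ^ (p ^ n) ^ 2 + X 1 ^ p ^ n * X 3 ^ (p ^ n) ^ 2 := by
    rw [u1s, frob_add, mul_pow, mul_pow, ← pow_mul, ← pow_mul, ← sq]
  have hd22q : d22 F (p ^ n) ^ p ^ n
      = X 1 ^ p ^ n * X 0 ^ (p ^ n) ^ 2 - X 0 ^ p ^ n * X 1 ^ (p ^ n) ^ 2 := by
    rw [d22, frob_sub, mul_pow, mul_pow, ← pow_mul, ← pow_mul, ← sq]
  have hd22sq : d22s F (p ^ n) ^ p ^ n
      = X 2 ^ p ^ n * X 3 ^ (p ^ n) ^ 2 - X 3 ^ p ^ n * X 2 ^ (p ^ n) ^ 2 := by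
    rw [d22s, frob_sub, mul_pow, mul_pow, ← pow_mul, ← pow_mul, ← sq]
  have hdd : d22 F (p ^ n) * d22 F (p ^ n) ^ (p ^ n - 1) = d22 F (p ^ n) ^ p ^ n := by
    rw [← pow_succ', Nat.sub_add_cancel hq1]
  have hdds : d22s F (p ^ n) * d22s F (p ^ n) ^ (p ^ n - 1) = d22s F (p ^ n) ^ p ^ n := by
    rw [← pow_succ', Nat.sub_add_cancel hq1]
  refine ⟨?_, ?_, ?_⟩
  · rw [pow_succ, hu0q, u0, u1, u1s, d22, d22s]; ring
  · apply mul_left_cancel₀ hd22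
    rw [mul_sub, ← mul_assoc, ← mul_assoc, hc21, hdd, hd22q, hu1q, hu0q, u1s, d22]
    ring
  · apply mul_left_cancel₀ hd22s
    rw [mul_sub, ← mul_assoc, ← mul_assoc, hc21s, hdds, hd22sq, hu1sq, hu0q, u1, d22s]
    ring
end
end

section
/- For every s with 0 ≤ s ≤ q−1, the polynomial u₀^q divides u₁^{s+1}·(d₂₂*)^{q−s−1} + (u₁*)^{q−s}·d₂₂^s in R₂, and the quotient h_s = (u₁^{s+1}·(d₂₂*)^{q−s−1} + (u₁*)^{q−s}·d₂₂^s)/u₀^q is a polynomial fixed by every element of SL₂(F_q), i.e., h_s ∈ R₂^{SL₂}. -/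
open MvPolynomial

noncomputable section

/-!
The polynomials `u₀, u₁, u₁*, d₂₂, d₂₂*` are `SL₂`-invariant: each is a pairing `⟨φx, ψy⟩`
or a determinant `det(φx, ψx)`, `det(φy, ψy)`, where `φ, ψ` are the identity or the
`q`-Frobenius, which commutes with the `𝔽_q`-linear action. So once `u₀^q` divides
`f_s = u₁^{s+1}(d₂₂*)^{q-s-1} + (u₁*)^{q-s}d₂₂^s`, the quotient is invariant too.

For the divisibility, `u₀` is prime and does not divide `d₂₂*`, and
`u₁u₁* - d₂₂d₂₂* = u₀^{q+1}` by Frobenius. Hence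
`d₂₂* f_{s+1} = u₁ f_s - (u₁*)^{q-s-1} d₂₂^s (u₁u₁* - d₂₂d₂₂*)`,
so `u₀^q ∣ f_s` passes from `s` to `s + 1`. For `s = 0`, Frobenius again gives
`d₂₂* f_0 = u₀^q (y₁y₂^{q²} - y₂y₁^{q²})`.
-/

theorem Prime.pow_dvd_mul_pow_add_pow_mul_pow {R : Type*} [CommRing R] [IsDomain R]
    {π a b d e : R} {n : ℕ} (hπ : Prime π) (he : ¬ π ∣ e) (hab : π ^ n ∣ a * b - d * e)
    (h₀ : π ^ n ∣ a * e ^ n + b ^ n * e) :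
    ∀ s ≤ n - 1, π ^ n ∣ a ^ (s + 1) * e ^ (n - s - 1) + b ^ (n - s) * d ^ s := by
  intro s hs
  refine hπ.pow_dvd_of_dvd_mul_left n he ?_
  induction s with
  | zero =>
    rcases n with _ | n
    · simp
    · convert h₀ using 1
      simp only [Nat.sub_zero, Nat.add_sub_cancel, pow_succ]
      ring
  | succ s ih =>
    obtain ⟨m, hm⟩ : ∃ m, n = s + m + 2 := ⟨n - s - 2, by omega⟩
    have hf : π ^ n ∣ a ^ (s + 1) * e ^ (m + 1) + b ^ (m + 2) * d ^ s := by
      have := hπ.pow_dvd_of_dvd_mul_left n he (ih (by omega))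
      rwa [show n - s - 1 = m + 1 by omega, show n - s = m + 2 by omega] at this
    rw [show n - (s + 1) - 1 = m by omega, show n - (s + 1) = m + 1 by omega]
    have key : e * (a ^ (s + 1 + 1) * e ^ m + b ^ (m + 1) * d ^ (s + 1)) =
        a * (a ^ (s + 1) * e ^ (m + 1) + b ^ (m + 2) * d ^ s) -
          b ^ (m + 1) * d ^ s * (a * b - d * e) := by ring
    rw [key]
    exact dvd_sub (dvd_mul_of_dvd_right hf a) (dvd_mul_of_dvd_right hab _)

variable {F : Type} [Field F]

theorem prime_u0 : Prime (u0 F) := by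
  have hP : Prime (Polynomial.C (X 1) * Polynomial.X + Polynomial.C (X 0 * X 2) :
      Polynomial (MvPolynomial (Fin 3) F)) := by
    refine UniqueFactorizationMonoid.irreducible_iff_prime.mp
      (Polynomial.irreducible_C_mul_X_add_C (X_ne_zero 1) ?_)
    refine X_prime.irreducible.isRelPrime_iff_not_dvd.mpr fun h => ?_
    rcases X_prime.dvd_or_dvd h with h | h <;> simp [X_dvd_X] at h
  rw [← MulEquiv.prime_iff (finSuccEquiv F 3).toMulEquiv]
  convert hP
  change finSuccEquiv F 3 (X 0 * X (Fin.succ 1) + X (Fin.succ 0) * X (Fin.succ 2)) = _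
  simp only [map_add, map_mul, finSuccEquiv_X_zero, finSuccEquiv_X_succ]
  ring

theorem u0_not_dvd_d22s {q : ℕ} (hq : 1 < q) : ¬ u0 F ∣ d22s F q := by
  intro h
  -- `x ↦ 0, y ↦ (1, T)` kills `u₀` but sends `d₂₂*` to `T ^ q - T`.
  have := map_dvd (aeval ![0, 0, 1, Polynomial.X] : R2 F →ₐ[F] Polynomial F) h
  simp [u0, d22s, FiniteField.X_pow_card_sub_X_ne_zero F hq] at this

section Invariance

theorem act_X_of_mem_SL2 {A : GL (Fin 2) F} (hA : A ∈ SL2 F) :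
    act A (X 0) = C (A.val 1 1) * X 0 - C (A.val 1 0) * X 1 ∧
    act A (X 1) = C (A.val 0 0) * X 1 - C (A.val 0 1) * X 0 ∧
    act A (X 2) = C (A.val 0 0) * X 2 + C (A.val 0 1) * X 3 ∧
    act A (X 3) = C (A.val 1 0) * X 2 + C (A.val 1 1) * X 3 := by
  have hdet : A.val.det = 1 := hA
  simp [act, hdet]

theorem C_det_of_mem_SL2 {A : GL (Fin 2) F} (hA : A ∈ SL2 F) :
    C (A.val 0 0) * C (A.val 1 1) - C (A.val 0 1) * C (A.val 1 0) = (1 : R2 F) := by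
  rw [← map_mul, ← map_mul, ← map_sub, ← Matrix.det_fin_two, show A.val.det = 1 from hA,
    map_one]

variable {φ ψ : R2 F →ₐ[F] R2 F}

theorem pairing_mem_invariantRing (hφ : ∀ A f, act A (φ f) = φ (act A f))
    (hψ : ∀ A f, act A (ψ f) = ψ (act A f)) :
    φ (X 0) * ψ (X 2) + φ (X 1) * ψ (X 3) ∈ invariantRing (SL2 F) := by
  intro A hA
  obtain ⟨h0, h1, h2, h3⟩ := act_X_of_mem_SL2 hA
  simp only [map_add, map_mul, hφ, hψ, h0, h1, h2, h3, map_sub, algHom_C, algebraMap_eq]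
  linear_combination (φ (X 0) * ψ (X 2) + φ (X 1) * ψ (X 3)) * C_det_of_mem_SL2 hA

theorem det_x_mem_invariantRing (hφ : ∀ A f, act A (φ f) = φ (act A f))
    (hψ : ∀ A f, act A (ψ f) = ψ (act A f)) :
    φ (X 1) * ψ (X 0) - φ (X 0) * ψ (X 1) ∈ invariantRing (SL2 F) := by
  intro A hA
  obtain ⟨h0, h1, -, -⟩ := act_X_of_mem_SL2 hA
  simp only [map_sub, map_mul, hφ, hψ, h0, h1, algHom_C, algebraMap_eq]
  linear_combination (φ (X 1) * ψ (X 0) - φ (X 0) * ψ (X 1)) * C_det_of_mem_SL2 hA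

theorem det_y_mem_invariantRing (hφ : ∀ A f, act A (φ f) = φ (act A f))
    (hψ : ∀ A f, act A (ψ f) = ψ (act A f)) :
    φ (X 2) * ψ (X 3) - φ (X 3) * ψ (X 2) ∈ invariantRing (SL2 F) := by
  intro A hA
  obtain ⟨-, -, h2, h3⟩ := act_X_of_mem_SL2 hA
  simp only [map_add, map_sub, map_mul, hφ, hψ, h2, h3, algHom_C, algebraMap_eq]
  linear_combination (φ (X 2) * ψ (X 3) - φ (X 3) * ψ (X 2)) * C_det_of_mem_SL2 hA

end Invariance

theorem mem_invariantRing_of_mul_mem {G : Subgroup (GL (Fin 2) F)} {a h : R2 F}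
    (ha : a ∈ invariantRing G) (ha₀ : a ≠ 0) (hah : a * h ∈ invariantRing G) :
    h ∈ invariantRing G := fun A hA =>
  mul_left_cancel₀ ha₀ (by rw [← ha A hA, ← map_mul, hah A hA, ha A hA])

theorem u0_mem_invariantRing : u0 F ∈ invariantRing (SL2 F) :=
  pairing_mem_invariantRing (φ := AlgHom.id F _) (ψ := AlgHom.id F _) (fun _ _ => rfl)
    (fun _ _ => rfl)

section FiniteField

open FiniteField

variable [Fintype F]

local notation "q" => Fintype.card F

theorem act_frobeniusAlgHom (A : GL (Fin 2) F) (f : R2 F) :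
    act A (frobeniusAlgHom F (R2 F) f) = frobeniusAlgHom F (R2 F) (act A f) := by
  simp

theorem u1_mem_invariantRing : u1 F q ∈ invariantRing (SL2 F) := by
  simpa [u1] using pairing_mem_invariantRing (ψ := AlgHom.id F _) act_frobeniusAlgHom
    (fun _ _ => rfl)

theorem u1s_mem_invariantRing : u1s F q ∈ invariantRing (SL2 F) := by
  simpa [u1s] using pairing_mem_invariantRing (φ := AlgHom.id F _) (fun _ _ => rfl)
    act_frobeniusAlgHom

theorem d22_mem_invariantRing : d22 F q ∈ invariantRing (SL2 F) := by
  simpa [d22] using det_x_mem_invariantRing (φ := AlgHom.id F _) (fun _ _ => rfl)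
    act_frobeniusAlgHom

theorem d22s_mem_invariantRing : d22s F q ∈ invariantRing (SL2 F) := by
  simpa [d22s] using det_y_mem_invariantRing (φ := AlgHom.id F _) (fun _ _ => rfl)
    act_frobeniusAlgHom

theorem u0_pow_card : u0 F ^ q = X 0 ^ q * X 2 ^ q + X 1 ^ q * X 3 ^ q := by
  rw [← frobeniusAlgHom_apply F, u0, map_add, map_mul, map_mul]
  simp only [frobeniusAlgHom_apply]

theorem u1_mul_u1s_sub_d22_mul_d22s :
    u1 F q * u1s F q - d22 F q * d22s F q = u0 F ^ q * u0 F := by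
  rw [u0_pow_card, u1, u1s, d22, d22s, u0]
  ring

theorem u1_mul_d22s_pow_add_u1s_pow_mul_d22s :
    u1 F q * d22s F q ^ q + u1s F q ^ q * d22s F q =
      u0 F ^ q * (X 2 * X 3 ^ (q * q) - X 3 * X 2 ^ (q * q)) := by
  rw [← frobeniusAlgHom_apply F, ← frobeniusAlgHom_apply F _ (u1s F _),
    ← frobeniusAlgHom_apply F _ (u0 F)]
  simp only [u1, u1s, d22s, u0, map_add, map_sub, map_mul]
  simp only [frobeniusAlgHom_apply]
  ring

end FiniteField

theorem stmt_7_general (q : ℕ) (F : Type) [Field F] [Fintype F]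
    (hF : Fintype.card F = q) :
    ∀ s ≤ q - 1,
      ∃ h : R2 F,
        u0 F ^ q * h =
          u1 F q ^ (s + 1) * d22s F q ^ (q - s - 1) + u1s F q ^ (q - s) * d22 F q ^ s ∧
        h ∈ invariantRing (SL2 F) := by
  subst hF
  intro s hs
  obtain ⟨h, hh⟩ := prime_u0.pow_dvd_mul_pow_add_pow_mul_pow
    (u0_not_dvd_d22s Fintype.one_lt_card) ⟨u0 F, u1_mul_u1s_sub_d22_mul_d22s⟩
    ⟨_, u1_mul_d22s_pow_add_u1s_pow_mul_d22s⟩ s hs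
  have hf : u0 F ^ Fintype.card F * h ∈ invariantRing (SL2 F) := by
    rw [← hh]
    exact add_mem (mul_mem (pow_mem u1_mem_invariantRing _) (pow_mem d22s_mem_invariantRing _))
      (mul_mem (pow_mem u1s_mem_invariantRing _) (pow_mem d22_mem_invariantRing _))
  exact ⟨h, hh.symm, mem_invariantRing_of_mul_mem (pow_mem u0_mem_invariantRing _)
    (pow_ne_zero _ prime_u0.ne_zero) hf⟩

/-- for `0 ≤ s ≤ q−1`, `u₀^q` divides
`u₁^{s+1}(d₂₂*)^{q−s−1} + (u₁*)^{q−s}d₂₂^s` in `R₂`, and the quotient `h_s`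
is an `SL₂(F_q)`-invariant polynomial. -/
theorem stmt_7 (q : ℕ) (hq : IsPrimePow q) (F : Type) [Field F] [Fintype F]
    (hF : Fintype.card F = q) :
    ∀ s ≤ q - 1,
      ∃ h : R2 F,
        u0 F ^ q * h =
          u1 F q ^ (s + 1) * d22s F q ^ (q - s - 1) + u1s F q ^ (q - s) * d22 F q ^ s ∧
        h ∈ invariantRing (SL2 F) :=
  stmt_7_general q F hF
end
end

section
/- Let ∗ be the F_q-algebra automorphism of R₂ determined by x₁ ↦ y₂, x₂ ↦ y₁, y₁ ↦ x₂, y₂ ↦ x₁. Then ∗ maps R₂^G onto itself for each G ∈ {P₂, SL₂, GL₂(F_q)}; moreover ∗(d₂₂) = d₂₂*, ∗(c₂₁) = c₂₁*, ∗(u₀) = u₀, ∗(u₁) = u₁*, ∗(h_s) = h_{q−1−s} for all 0 ≤ s ≤ q−1, and in particular h₀ = c₂₁* and h_{q−1} = c₂₁. -/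
open MvPolynomial

noncomputable section

/-- The involution `∗ : R₂ → R₂`, `x₁ ↦ y₂, x₂ ↦ y₁, y₁ ↦ x₂, y₂ ↦ x₁`. -/
def starMap (F : Type) [Field F] : R2 F →ₐ[F] R2 F := aeval ![X 3, X 2, X 1, X 0]

section AuxTau

variable {F : Type} [Field F]

lemma det_ne_zero' (A : GL (Fin 2) F) : A.val.det ≠ 0 := by
  have h : A.val.det * (A⁻¹).val.det = 1 := by
    rw [← Matrix.det_mul, ← Units.val_mul, mul_inv_cancel, Units.val_one, Matrix.det_one]
  intro h0
  rw [h0, zero_mul] at h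
  exact zero_ne_one h

/-- The matrix of the conjugating map `τ(A) = (det A)⁻¹ · [[a,−b],[−c,d]]`. -/
def tauMat (A : GL (Fin 2) F) : Matrix (Fin 2) (Fin 2) F :=
  !![(A.val.det)⁻¹ * A.val 0 0, -((A.val.det)⁻¹ * A.val 0 1);
     -((A.val.det)⁻¹ * A.val 1 0), (A.val.det)⁻¹ * A.val 1 1]

/-- `τ(A)` as an element of `GL₂`. -/
def tau (A : GL (Fin 2) F) : GL (Fin 2) F where
  val := tauMat A
  inv := !![A.val 1 1, A.val 0 1; A.val 1 0, A.val 0 0]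
  val_inv := by
    have hne := det_ne_zero' A
    apply Matrix.ext
    intro i j
    fin_cases i <;> fin_cases j <;>
      simp [tauMat, Matrix.mul_apply, Fin.sum_univ_two, Matrix.one_apply] <;>
      first
      | ring1
      | linear_combination (-(A.val.det)⁻¹) * Matrix.det_fin_two A.val + inv_mul_cancel₀ hne
  inv_val := by
    have hne := det_ne_zero' A
    apply Matrix.ext
    intro i j
    fin_cases i <;> fin_cases j <;>
      simp [tauMat, Matrix.mul_apply, Fin.sum_univ_two, Matrix.one_apply] <;>
      first
      | ring1
      | linear_combination (-(A.val.det)⁻¹) * Matrix.det_fin_two A.val + inv_mul_cancel₀ hne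

lemma tau_val (A : GL (Fin 2) F) : (tau A).val = tauMat A := rfl

lemma tau_apply (A : GL (Fin 2) F) (i j : Fin 2) :
    (tau A).val i j = tauMat A i j := rfl

lemma tau_det (A : GL (Fin 2) F) : (tau A).val.det = (A.val.det)⁻¹ := by
  have hne := det_ne_zero' A
  rw [tau_val, tauMat, Matrix.det_fin_two_of]
  linear_combination (-((A.val.det)⁻¹^2)) * Matrix.det_fin_two A.val +
    (A.val.det)⁻¹ * inv_mul_cancel₀ hne

end AuxTau
section AuxStar

variable {F : Type} [Field F]

lemma starMap_starMap (f : R2 F) : starMap F (starMap F f) = f := by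
  have hcomp : (starMap F).comp (starMap F) = AlgHom.id F (R2 F) := by
    apply MvPolynomial.algHom_ext
    intro i
    fin_cases i <;> simp [starMap]
  have := DFunLike.congr_fun hcomp f
  simpa using this

lemma star_act (A : GL (Fin 2) F) :
    (starMap F).comp (act (tau A)) = (act A).comp (starMap F) := by
  have hne := det_ne_zero' A
  have hcomm : ∀ r : F, A.val.det * ((A.val.det)⁻¹ * r) = r := by
    intro r
    field_simp
  have hE2 : ((A.val.det)⁻¹ * A.val 0 0 * ((A.val.det)⁻¹ * A.val 1 1)
      - (A.val.det)⁻¹ * A.val 0 1 * ((A.val.det)⁻¹ * A.val 1 0)) = (A.val.det)⁻¹ := by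
    linear_combination (-((A.val.det)⁻¹^2)) * Matrix.det_fin_two A.val +
      (A.val.det)⁻¹ * inv_mul_cancel₀ hne
  have hC : ∀ r : F, C (A.val.det) * (C ((A.val.det)⁻¹) * C r) = (C r : R2 F) := by
    intro r
    rw [← map_mul, ← map_mul, hcomm]
  apply MvPolynomial.algHom_ext
  intro i
  fin_cases i <;>
    simp [starMap, act, tau_val, tauMat, tau_det, inv_inv, hcomm, algebraMap_eq,
      mul_neg, map_neg] <;>
    first
    | ring1
    | (rw [hE2, inv_inv]; simp only [hC]; try ring1)
end AuxStar
section AuxMem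

variable {F : Type} [Field F]

lemma tau_mem_P2 {A : GL (Fin 2) F} (hA : A ∈ P2 F) : tau A ∈ P2 F := by
  obtain ⟨h1, h2, h3⟩ := hA
  have hdet : A.val.det = 1 := by
    rw [Matrix.det_fin_two, h1, h2, h3]
    ring
  refine ⟨?_, ?_, ?_⟩ <;> simp [tau_val, tauMat, hdet, h1, h2, h3]

lemma tau_mem_SL2 {A : GL (Fin 2) F} (hA : A ∈ SL2 F) : tau A ∈ SL2 F := by
  have hA' : A.val.det = 1 := hA
  show (tau A).val.det = 1
  rw [tau_det, hA', inv_one]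

lemma star_invariant {G : Subgroup (GL (Fin 2) F)} (hG : ∀ A ∈ G, tau A ∈ G) :
    (invariantRing G).map (starMap F) = invariantRing G := by
  have hmem : ∀ f ∈ invariantRing G, starMap F f ∈ invariantRing G := by
    intro f hf A hA
    have h1 := DFunLike.congr_fun (star_act A) f
    simp only [AlgHom.comp_apply] at h1
    rw [← h1, hf (tau A) (hG A hA)]
  apply le_antisymm
  · rintro g hg
    obtain ⟨f, hf, rfl⟩ := Subalgebra.mem_map.mp hg
    exact hmem f hf
  · intro f hf
    exact Subalgebra.mem_map.mpr ⟨starMap F f, hmem f hf, starMap_starMap f⟩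

end AuxMem
section AuxImages

variable {F : Type} [Field F]

lemma star_d22 (q : ℕ) : starMap F (d22 F q) = d22s F q := by
  simp only [starMap, d22, d22s, map_sub, map_mul, map_pow, aeval_X]
  simp

lemma star_d22s (q : ℕ) : starMap F (d22s F q) = d22 F q := by
  simp only [starMap, d22, d22s, map_sub, map_mul, map_pow, aeval_X]
  simp

lemma star_u0 : starMap F (u0 F) = u0 F := by
  simp only [starMap, u0, map_add, map_mul, aeval_X]
  simp
  try ring

lemma star_u1 (q : ℕ) : starMap F (u1 F q) = u1s F q := by
  simp only [starMap, u1, u1s, map_add, map_mul, map_pow, aeval_X]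
  simp
  try ring

lemma star_u1s (q : ℕ) : starMap F (u1s F q) = u1 F q := by
  simp only [starMap, u1, u1s, map_add, map_mul, map_pow, aeval_X]
  simp
  try ring

lemma d22s_ne_zero (q : ℕ) (hq1 : q ≠ 1) : d22s F q ≠ 0 := by
  intro h0
  have h1 := congrArg (aeval (![0, 0, Polynomial.X, 1] : Fin 4 → Polynomial F)) h0
  simp only [d22s, map_sub, map_mul, map_pow, aeval_X, map_zero] at h1
  simp at h1
  have h2 := congrArg (fun φ => Polynomial.coeff φ q) h1
  simp [Polynomial.coeff_X, Polynomial.coeff_X_pow, Ne.symm hq1] at h2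

lemma u0_ne_zero : (u0 F) ≠ 0 := by
  intro h0
  have h1 := congrArg (aeval (![Polynomial.X, 0, 1, 0] : Fin 4 → Polynomial F)) h0
  simp only [u0, map_add, map_mul, aeval_X, map_zero] at h1
  simp at h1

end AuxImages
/-- the involution `∗` preserves the invariant rings of `P₂`, `SL₂` and
`GL₂`, and satisfies `∗(d₂₂)=d₂₂*`, `∗(c₂₁)=c₂₁*`, `∗(u₀)=u₀`, `∗(u₁)=u₁*`,
`∗(h_s)=h_{q−1−s}`; in particular `h₀=c₂₁*` and `h_{q−1}=c₂₁`. -/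
theorem stmt_8 (q : ℕ) (hq : IsPrimePow q) (F : Type) [Field F] [Fintype F]
    (hF : Fintype.card F = q)
    (c21 c21s : R2 F)
    (hc21 : d22 F q * c21 = X 1 * X 0 ^ (q ^ 2) - X 0 * X 1 ^ (q ^ 2))
    (hc21s : d22s F q * c21s = X 2 * X 3 ^ (q ^ 2) - X 3 * X 2 ^ (q ^ 2))
    (h : ℕ → R2 F)
    (hh : ∀ s ≤ q - 1, u0 F ^ q * h s =
      u1 F q ^ (s + 1) * d22s F q ^ (q - s - 1) + u1s F q ^ (q - s) * d22 F q ^ s) :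
    (invariantRing (P2 F)).map (starMap F) = invariantRing (P2 F) ∧
    (invariantRing (SL2 F)).map (starMap F) = invariantRing (SL2 F) ∧
    (invariantRing (⊤ : Subgroup (GL (Fin 2) F))).map (starMap F) =
      invariantRing (⊤ : Subgroup (GL (Fin 2) F)) ∧
    starMap F (d22 F q) = d22s F q ∧
    starMap F c21 = c21s ∧
    starMap F (u0 F) = u0 F ∧
    starMap F (u1 F q) = u1s F q ∧
    (∀ s ≤ q - 1, starMap F (h s) = h (q - 1 - s)) ∧
    h 0 = c21s ∧
    h (q - 1) = c21 := by
  have hq1 : 1 < q := hq.one_lt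
  obtain ⟨p, n, hpp, hn, hpq⟩ := hq
  have hp : p.Prime := hpp.nat_prime
  haveI hcharF : CharP F p := by
    haveI : CharP F (ringChar F) := ringChar.charP F
    obtain ⟨m, hcprime, hcard⟩ := FiniteField.card F (ringChar F)
    have hdvd : p ∣ (ringChar F) ^ (m : ℕ) := by
      rw [← hcard, hF, ← hpq]
      exact dvd_pow_self p hn.ne'
    have hpc : p = ringChar F :=
      (Nat.prime_dvd_prime_iff_eq hp hcprime).mp (hp.dvd_of_dvd_pow hdvd)
    rw [hpc]
    exact ringChar.charP F
  haveI : Fact p.Prime := ⟨hp⟩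
  have frobAdd : ∀ a b : R2 F, (a + b) ^ q = a ^ q + b ^ q := by
    intro a b
    rw [← hpq]
    exact add_pow_char_pow a b p n
  have frobSub : ∀ a b : R2 F, (a - b) ^ q = a ^ q - b ^ q := by
    intro a b
    rw [← hpq]
    exact sub_pow_char_pow a b n
  have hd22s_ne : d22s F q ≠ 0 := d22s_ne_zero q (by omega)
  have hu0q_ne : u0 F ^ q ≠ 0 := pow_ne_zero _ u0_ne_zero
  have sd22 : starMap F (d22 F q) = d22s F q := star_d22 q
  have sd22s : starMap F (d22s F q) = d22 F q := star_d22s q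
  have su0 : starMap F (u0 F) = u0 F := star_u0
  have su1 : starMap F (u1 F q) = u1s F q := star_u1 q
  have su1s : starMap F (u1s F q) = u1 F q := star_u1s q
  have sc21 : starMap F c21 = c21s := by
    apply mul_left_cancel₀ hd22s_ne
    have h1 := congrArg (starMap F) hc21
    rw [map_mul, sd22] at h1
    rw [h1, hc21s]
    simp only [map_sub, map_mul, map_pow, starMap, aeval_X]
    simp
  have sh : ∀ s ≤ q - 1, starMap F (h s) = h (q - 1 - s) := by
    intro s hs
    apply mul_left_cancel₀ hu0q_ne
    have h1 := congrArg (starMap F) (hh s hs)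
    rw [map_mul, map_pow, su0, map_add, map_mul, map_mul, map_pow, map_pow, map_pow,
      map_pow, su1, su1s, sd22, sd22s] at h1
    have h2 := hh (q - 1 - s) (by omega)
    rw [h1, h2, show q - 1 - s + 1 = q - s by omega, show q - (q - 1 - s) - 1 = s by omega,
      show q - (q - 1 - s) = s + 1 by omega, show q - s - 1 = q - 1 - s by omega]
    ring
  have h0eq : h 0 = c21s := by
    apply mul_left_cancel₀ hu0q_ne
    apply mul_left_cancel₀ hd22s_ne
    have e1 := hh 0 (Nat.zero_le _)
    simp only [Nat.sub_zero, pow_zero, pow_one, mul_one, zero_add] at e1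
    have hu0q : u0 F ^ q = X 0 ^ q * X 2 ^ q + X 1 ^ q * X 3 ^ q := by
      rw [u0, frobAdd, mul_pow, mul_pow]
    have hd22sq : d22s F q ^ q = X 2 ^ q * (X 3 ^ q) ^ q - X 3 ^ q * (X 2 ^ q) ^ q := by
      rw [d22s, frobSub, mul_pow, mul_pow]
    have hu1sq : u1s F q ^ q = X 0 ^ q * (X 2 ^ q) ^ q + X 1 ^ q * (X 3 ^ q) ^ q := by
      rw [u1s, frobAdd, mul_pow, mul_pow]
    calc d22s F q * (u0 F ^ q * h 0)
        = d22s F q * (u1 F q * d22s F q ^ (q - 1) + u1s F q ^ q) := by rw [e1]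
      _ = u1 F q * d22s F q ^ (q - 1 + 1) + u1s F q ^ q * d22s F q := by ring
      _ = u1 F q * d22s F q ^ q + u1s F q ^ q * d22s F q := by
          rw [show q - 1 + 1 = q by omega]
      _ = u0 F ^ q * (X 2 * X 3 ^ (q ^ 2) - X 3 * X 2 ^ (q ^ 2)) := by
          rw [hu0q, hu1sq, hd22sq, u1, d22s, show q ^ 2 = q * q by ring]
          ring
      _ = u0 F ^ q * (d22s F q * c21s) := by rw [hc21s]
      _ = d22s F q * (u0 F ^ q * c21s) := by ring
  have hqm1 : h (q - 1) = c21 := by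
    have hx := sh 0 (Nat.zero_le _)
    rw [Nat.sub_zero, h0eq, ← sc21, starMap_starMap] at hx
    exact hx.symm
  exact ⟨star_invariant (fun A hA => tau_mem_P2 hA),
    star_invariant (fun A hA => tau_mem_SL2 hA),
    star_invariant (fun A _ => Subgroup.mem_top _),
    sd22, sc21, su0, su1, sh, h0eq, hqm1⟩
end
end

section
/- For every s with 1 ≤ s ≤ q−1 one has u₁*·h_s = u₀·u₁^s·(d₂₂*)^{q−s−1} + d₂₂·h_{s−1}, and for every s with 0 ≤ s ≤ q−2 one has u₁·h_s = u₀·(u₁*)^{q−s−1}·d₂₂^s + d₂₂*·h_{s+1}. In particular, u₀·(u₁*)^{q−1} = u₁·h₀ − d₂₂*·h₁ and u₀·u₁^{q−1} = u₁*·h_{q−1} − d₂₂·h_{q−2}. -/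
open MvPolynomial

noncomputable section

/-- the identities (3.9)–(3.11) for the polynomials `h_s`. -/
theorem stmt_9 (q : ℕ) (hq : IsPrimePow q) (F : Type) [Field F] [Fintype F]
    (hF : Fintype.card F = q)
    (c21 c21s : R2 F)
    (hc21 : d22 F q * c21 = X 1 * X 0 ^ (q ^ 2) - X 0 * X 1 ^ (q ^ 2))
    (hc21s : d22s F q * c21s = X 2 * X 3 ^ (q ^ 2) - X 3 * X 2 ^ (q ^ 2))
    (h : ℕ → R2 F)
    (hh : ∀ s ≤ q - 1, u0 F ^ q * h s =
      u1 F q ^ (s + 1) * d22s F q ^ (q - s - 1) + u1s F q ^ (q - s) * d22 F q ^ s) :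
    (∀ s, 1 ≤ s → s ≤ q - 1 →
      u1s F q * h s = u0 F * u1 F q ^ s * d22s F q ^ (q - s - 1) + d22 F q * h (s - 1)) ∧
    (∀ s ≤ q - 2,
      u1 F q * h s = u0 F * u1s F q ^ (q - s - 1) * d22 F q ^ s + d22s F q * h (s + 1)) ∧
    u0 F * u1s F q ^ (q - 1) = u1 F q * h 0 - d22s F q * h 1 ∧
    u0 F * u1 F q ^ (q - 1) = u1s F q * h (q - 1) - d22 F q * h (q - 2) := by
  obtain ⟨p, n, hp, hn, hpq⟩ := hq
  have hq2 : 2 ≤ q := by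
    rw [← hpq]
    calc 2 ≤ p := hp.nat_prime.two_le
    _ = p ^ 1 := (pow_one p).symm
    _ ≤ p ^ n := Nat.pow_le_pow_right hp.nat_prime.pos hn
  haveI hfp : Fact p.Prime := ⟨hp.nat_prime⟩
  haveI hcharF : CharP F p := by
    obtain ⟨p', hFp'⟩ := CharP.exists F
    haveI := hFp'
    obtain ⟨n', hpp', hcard⟩ := FiniteField.card F p'
    have hdvd : p ∣ p' ^ (n' : ℕ) := by
      rw [← hcard, hF, ← hpq]
      exact dvd_pow_self p (by omega)
    have hpe : p = p' := (Nat.prime_dvd_prime_iff_eq hp.nat_prime hpp').mp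
      (hp.nat_prime.dvd_of_dvd_pow hdvd)
    rwa [hpe]
  have hu0 : u0 F ≠ 0 := by
    intro h0
    have hev : eval ![(1 : F), 0, 1, 0] (u0 F) = 1 := by
      simp [u0]
    rw [h0, map_zero] at hev
    exact one_ne_zero hev.symm
  have key : u1 F q * u1s F q = u0 F ^ q * u0 F + d22 F q * d22s F q := by
    have hfrob : (X 0 * X 2 + X 1 * X 3 : R2 F) ^ q
        = (X 0 * X 2) ^ q + (X 1 * X 3) ^ q := by
      rw [← hpq]; exact add_pow_char_pow _ _ p n
    simp only [u1, u1s, u0, d22, d22s]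
    rw [hfrob]
    ring
  have part1 : ∀ s, 1 ≤ s → s ≤ q - 1 →
      u1s F q * h s = u0 F * u1 F q ^ s * d22s F q ^ (q - s - 1) + d22 F q * h (s - 1) := by
    intro s hs1 hs2
    obtain ⟨t, rfl⟩ : ∃ t, s = t + 1 := ⟨s - 1, by omega⟩
    obtain ⟨r, hr⟩ : ∃ r, q = t + 2 + r := ⟨q - t - 2, by omega⟩
    have h1 := hh (t + 1) (by omega)
    have h2 := hh t (by omega)
    rw [show q - (t + 1) - 1 = r from by omega, show q - (t + 1) = r + 1 from by omega] at h1
    rw [show q - t - 1 = r + 1 from by omega, show q - t = r + 2 from by omega] at h2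
    rw [show q - (t + 1) - 1 = r from by omega, Nat.add_sub_cancel]
    apply mul_left_cancel₀ (pow_ne_zero q hu0)
    linear_combination u1s F q * h1 - d22 F q * h2 + (u1 F q ^ (t + 1) * d22s F q ^ r) * key
  have part2 : ∀ s ≤ q - 2,
      u1 F q * h s = u0 F * u1s F q ^ (q - s - 1) * d22 F q ^ s + d22s F q * h (s + 1) := by
    intro s hs
    obtain ⟨r, hr⟩ : ∃ r, q = s + 2 + r := ⟨q - s - 2, by omega⟩
    have h1 := hh s (by omega)
    have h2 := hh (s + 1) (by omega)
    rw [show q - s - 1 = r + 1 from by omega, show q - s = r + 2 from by omega] at h1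
    rw [show q - (s + 1) - 1 = r from by omega, show q - (s + 1) = r + 1 from by omega] at h2
    rw [show q - s - 1 = r + 1 from by omega]
    apply mul_left_cancel₀ (pow_ne_zero q hu0)
    linear_combination u1 F q * h1 - d22s F q * h2 + (u1s F q ^ (r + 1) * d22 F q ^ s) * key
  refine ⟨part1, part2, ?_, ?_⟩
  · have h3 := part2 0 (Nat.zero_le _)
    rw [show q - 0 - 1 = q - 1 from by omega] at h3
    linear_combination -h3
  · have h4 := part1 (q - 1) (by omega) le_rfl
    rw [show q - (q - 1) - 1 = 0 from by omega, show q - 1 - 1 = q - 2 from by omega] at h4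
    linear_combination -h4
end
end

section
/- The subalgebra 𝒜 is a free module over the subalgebra ℬ with basis {(d₂₂*)^α·d₂₂^β : 0 ≤ α, β ≤ q−2}. -/
open MvPolynomial

noncomputable section

/-!
For the lexicographic order with `X 0 > X 1 > X 2 > X 3`, the leading monomials of `d₂₂`, `c₂₁`,
`d₂₂*`, `c₂₁*` are `X 1 * X 0 ^ q`, `X 0 ^ (q² - q)`, `X 3 * X 2 ^ q`, `X 2 ^ (q² - q)`, and their
exponent vectors are linearly independent over `ℕ`. So distinct monomials in the four generators
have distinct leading monomials and are linearly independent over `F`. Dividing the exponents of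
`d₂₂` and `d₂₂*` by `q - 1` with remainder writes each such monomial in exactly one way as a
monomial in the generators of `ℬ` times some `(d₂₂*)^α * d₂₂^β` with `α, β < q - 1`; this gives
spanning, and independence over `ℬ` follows because `ℬ` is spanned over `F` by its monomials.
-/

theorem LinearIndependent.of_smul_of_span_eq_top {R S A ι ι' : Type*} [CommSemiring R]
    [Semiring S] [AddCommMonoid A] [Module R S] [Module S A] [Module R A] [IsScalarTower R S A]
    {b : ι → S} {c : ι' → A} (hb : Submodule.span R (Set.range b) = ⊤)
    (h : LinearIndependent R fun p : ι' × ι ↦ b p.2 • c p.1) : LinearIndependent S c := by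
  rw [LinearIndependent, Finsupp.linearCombination_smul, LinearMap.coe_comp,
    LinearMap.coe_comp] at h
  rw [← Finsupp.range_linearCombination, LinearMap.range_eq_top] at hb
  exact h.of_comp_right <|
    (Finsupp.mapRange_surjective _ (map_zero _) hb).comp (Finsupp.curryLinearEquiv R).surjective

def powProd4 {M : Type*} [Monoid M] (a b c d : M) (e : ℕ × ℕ × ℕ × ℕ) : M :=
  a ^ e.1 * b ^ e.2.1 * c ^ e.2.2.1 * d ^ e.2.2.2

theorem Submonoid.closure_four_eq_range {M : Type*} [CommMonoid M] (a b c d : M) :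
    (closure {a, b, c, d} : Set M) = Set.range (powProd4 a b c d) := by
  ext x
  have hsplit : ({a, b, c, d} : Set M) = {a, b} ∪ {c, d} := by
    rw [Set.insert_union, Set.singleton_union]
  rw [hsplit, closure_union, SetLike.mem_coe, mem_sup]
  simp only [mem_closure_pair, powProd4, Set.mem_range, Prod.exists]
  constructor
  · rintro ⟨_, ⟨i, j, rfl⟩, _, ⟨k, l, rfl⟩, rfl⟩
    exact ⟨i, j, k, l, mul_assoc _ _ _⟩
  · rintro ⟨i, j, k, l, rfl⟩
    exact ⟨_, ⟨i, j, rfl⟩, _, ⟨k, l, rfl⟩, (mul_assoc _ _ _).symm⟩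

theorem Algebra.toSubmodule_adjoin_four {R A : Type*} [CommSemiring R] [CommSemiring A]
    [Algebra R A] (a b c d : A) :
    Subalgebra.toSubmodule (adjoin R {a, b, c, d}) =
      Submodule.span R (Set.range (powProd4 a b c d)) := by
  rw [adjoin_eq_span, Submonoid.closure_four_eq_range]

theorem Nat.eq_and_eq_of_mul_add_eq_mul_add {n i j b c : ℕ} (hb : b < n) (hc : c < n)
    (h : n * i + b = n * j + c) : i = j ∧ b = c := by
  have hn : 0 < n := by omega
  have hi := (Nat.div_mod_unique hn).mpr ⟨add_comm b (n * i), hb⟩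
  have hj := (Nat.div_mod_unique hn).mpr ⟨(add_comm c (n * j)).trans h.symm, hc⟩
  exact ⟨hi.1.symm.trans hj.1, hi.2.symm.trans hj.2⟩

section PolynomialSubalgebra

variable {R A : Type*} [CommSemiring R] [CommSemiring A] [Algebra R A] (a b c d : A) (n : ℕ)

theorem powProd4_mem_adjoin (e : ℕ × ℕ × ℕ × ℕ) :
    powProd4 a b c d e ∈ Algebra.adjoin R {a, b, c, d} := by
  rw [← Subalgebra.mem_toSubmodule, Algebra.toSubmodule_adjoin_four]
  exact Submodule.subset_span ⟨e, rfl⟩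

theorem powProd4_pow_mul_pow_mul_pow (i j k l α β : ℕ) :
    powProd4 (a ^ n) b (c ^ n) d (i, j, k, l) * (c ^ α * a ^ β) =
      powProd4 a b c d (n * i + β, j, n * k + α, l) := by
  simp only [powProd4, pow_add, pow_mul]
  ring

theorem mem_span_pow_mul_pow_of_mem_adjoin (hn : 0 < n) {x : A}
    (hx : x ∈ Algebra.adjoin R {a, b, c, d}) :
    x ∈ Submodule.span (Algebra.adjoin R {a ^ n, b, c ^ n, d})
      (Set.range fun p : Fin n × Fin n ↦ c ^ (p.1 : ℕ) * a ^ (p.2 : ℕ)) := by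
  rw [← Subalgebra.mem_toSubmodule, Algebra.toSubmodule_adjoin_four] at hx
  refine (Submodule.span_le (p := (Submodule.span _ _).restrictScalars R)).mpr ?_ hx
  rintro _ ⟨⟨i, j, k, l⟩, rfl⟩
  have hdiv := powProd4_pow_mul_pow_mul_pow a b c d n (i / n) j (k / n) l (k % n) (i % n)
  rw [Nat.div_add_mod, Nat.div_add_mod] at hdiv
  rw [SetLike.mem_coe, Submodule.restrictScalars_mem, ← hdiv]
  exact Submodule.smul_mem _
    (⟨_, powProd4_mem_adjoin (a ^ n) b (c ^ n) d _⟩ : Algebra.adjoin R {a ^ n, b, c ^ n, d})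
    (Submodule.subset_span ⟨(⟨k % n, Nat.mod_lt _ hn⟩, ⟨i % n, Nat.mod_lt _ hn⟩), rfl⟩)

theorem linearIndependent_pow_mul_pow_of_linearIndependent_powProd4
    (h : LinearIndependent R (powProd4 a b c d)) :
    LinearIndependent (Algebra.adjoin R {a ^ n, b, c ^ n, d})
      (fun p : Fin n × Fin n ↦ c ^ (p.1 : ℕ) * a ^ (p.2 : ℕ)) := by
  let coeff (e : ℕ × ℕ × ℕ × ℕ) : Algebra.adjoin R {a ^ n, b, c ^ n, d} :=
    ⟨_, powProd4_mem_adjoin (a ^ n) b (c ^ n) d e⟩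
  refine LinearIndependent.of_smul_of_span_eq_top (R := R) (b := coeff) ?_ ?_
  · refine Submodule.eq_top_iff'.mpr fun x ↦ ?_
    have hx := x.2
    rw [← Subalgebra.mem_toSubmodule, Algebra.toSubmodule_adjoin_four,
      Finsupp.mem_span_range_iff_exists_finsupp] at hx
    obtain ⟨r, hr⟩ := hx
    refine Finsupp.mem_span_range_iff_exists_finsupp.mpr ⟨r, Subtype.ext ?_⟩
    simpa [Finsupp.sum, coeff] using hr
  · let index (p : (Fin n × Fin n) × (ℕ × ℕ × ℕ × ℕ)) : ℕ × ℕ × ℕ × ℕ :=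
      (n * p.2.1 + p.1.2, p.2.2.1, n * p.2.2.2.1 + p.1.1, p.2.2.2.2)
    have hindex : Function.Injective index := by
      rintro ⟨⟨α, β⟩, i, j, k, l⟩ ⟨⟨α', β'⟩, i', j', k', l'⟩ he
      simp only [index, Prod.mk.injEq] at he
      obtain ⟨hi, hβ⟩ := Nat.eq_and_eq_of_mul_add_eq_mul_add β.2 β'.2 he.1
      obtain ⟨hk, hα⟩ := Nat.eq_and_eq_of_mul_add_eq_mul_add α.2 α'.2 he.2.2.1
      simp [Fin.ext hα, Fin.ext hβ, hi, hk, he.2.1, he.2.2.2]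
    convert h.comp index hindex using 1
    ext ⟨⟨α, β⟩, i, j, k, l⟩
    exact powProd4_pow_mul_pow_mul_pow a b c d n i j k l α β

end PolynomialSubalgebra

section LexDegree

open MonomialOrder

theorem MonomialOrder.linearIndependent_of_injective_degree {σ R ι : Type*}
    {m : MonomialOrder σ} [CommRing R] [NoZeroDivisors R] {f : ι → MvPolynomial σ R}
    (hf : ∀ i, f i ≠ 0)
    (hinj : Function.Injective fun i ↦ m.degree (f i)) : LinearIndependent R f := by
  classical
  rw [linearIndependent_iff']
  intro s g hsum i hi
  by_contra hgi
  set s' := s.filter (g · ≠ 0)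
  obtain ⟨j, hj, hmax⟩ := s'.exists_max_image (fun j ↦ m.toSyn (m.degree (f j)))
    ⟨i, Finset.mem_filter.mpr ⟨hi, hgi⟩⟩
  have hcoeff : (∑ k ∈ s', g k • f k).coeff (m.degree (f j)) = g j * m.leadingCoeff (f j) := by
    rw [MvPolynomial.coeff_sum, Finset.sum_eq_single j _ (fun h ↦ absurd hj h)]
    · rfl
    intro k hk hkj
    rw [MvPolynomial.coeff_smul, m.coeff_eq_zero_of_lt, smul_zero]
    exact lt_of_le_of_ne (hmax k hk) fun h ↦ hkj (hinj (m.toSyn.injective h))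
  rw [Finset.sum_filter_of_ne (fun k _ hk ↦ left_ne_zero_of_smul hk), hsum,
    MvPolynomial.coeff_zero] at hcoeff
  exact mul_ne_zero (Finset.mem_filter.mp hj).2 (m.leadingCoeff_ne_zero_iff.mpr (hf j))
    hcoeff.symm

theorem MonomialOrder.degree_powProd4 {σ R : Type*} (m : MonomialOrder σ) [CommRing R]
    [IsDomain R] {a b c d : MvPolynomial σ R} (ha : a ≠ 0) (hb : b ≠ 0) (hc : c ≠ 0) (hd : d ≠ 0)
    (e : ℕ × ℕ × ℕ × ℕ) :
    m.degree (powProd4 a b c d e) =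
      e.1 • m.degree a + e.2.1 • m.degree b + e.2.2.1 • m.degree c + e.2.2.2 • m.degree d := by
  simp [powProd4, m.degree_mul, m.degree_pow, ha, hb, hc, hd]

variable {σ R : Type*} [LinearOrder σ] [WellFoundedGT σ] [CommRing R]

theorem lex_degree_X_mul_X_pow_sub [Nontrivial R] {i j : σ} (hij : i < j) {k : ℕ} (hk : 2 ≤ k) :
    lex.degree (X j * X i ^ k - X i * X j ^ k : MvPolynomial σ R) =
      Finsupp.single j 1 + Finsupp.single i k := by
  classical
  have hmonomial (u v : σ) :
      (X u * X v ^ k : MvPolynomial σ R) =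
        monomial (Finsupp.single u 1 + Finsupp.single v k) 1 := by
    rw [X_pow_eq_monomial, X, monomial_mul, one_mul]
  rw [hmonomial, hmonomial, lex.degree_sub_of_lt] <;>
    simp only [lex.degree_monomial, one_ne_zero, if_false]
  rw [lex_lt_iff, Finsupp.Lex.lt_iff]
  refine ⟨i, fun l hl ↦ ?_, ?_⟩
  · simp [hl.ne, (hl.trans hij).ne]
  · simpa [hij.ne] using Nat.lt_of_succ_le hk

theorem X_mul_X_pow_sub_ne_zero [Nontrivial R] {i j : σ} (hij : i < j) {k : ℕ} (hk : 2 ≤ k) :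
    (X j * X i ^ k - X i * X j ^ k : MvPolynomial σ R) ≠ 0 :=
  lex.ne_zero_of_degree_ne_zero (by simp [lex_degree_X_mul_X_pow_sub hij hk])

theorem lex_degree_eq_of_mul_X_mul_X_pow_sub [IsDomain R] {i j : σ} (hij : i < j) {k K : ℕ}
    (hk : 2 ≤ k) (hkK : k ≤ K) {f : MvPolynomial σ R}
    (hf : (X j * X i ^ k - X i * X j ^ k) * f = X j * X i ^ K - X i * X j ^ K) :
    f ≠ 0 ∧ lex.degree f = Finsupp.single i (K - k) := by
  have hf0 : f ≠ 0 := by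
    rintro rfl
    exact X_mul_X_pow_sub_ne_zero hij (hk.trans hkK) (by rw [← hf, mul_zero])
  refine ⟨hf0, ?_⟩
  have hdeg := lex.degree_mul (X_mul_X_pow_sub_ne_zero hij hk) hf0
  rw [hf, lex_degree_X_mul_X_pow_sub hij hk, lex_degree_X_mul_X_pow_sub hij (hk.trans hkK),
    ← Nat.add_sub_cancel' hkK, Finsupp.single_add, ← add_assoc] at hdeg
  exact (add_left_cancel hdeg).symm

end LexDegree

section Generators

open MonomialOrder

variable {F : Type} [Field F] {q : ℕ}

theorem d22s_eq_neg : d22s F q = -(X 3 * X 2 ^ q - X 2 * X 3 ^ q) :=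
  (neg_sub _ _).symm

theorem lex_degree_d22 (hq : 2 ≤ q) :
    lex.degree (d22 F q) = Finsupp.single 1 1 + Finsupp.single 0 q :=
  lex_degree_X_mul_X_pow_sub (by decide) hq

theorem lex_degree_d22s (hq : 2 ≤ q) :
    lex.degree (d22s F q) = Finsupp.single 3 1 + Finsupp.single 2 q := by
  rw [d22s_eq_neg, degree_neg, lex_degree_X_mul_X_pow_sub (by decide) hq]

theorem lex_degree_of_d22_mul (hq : 2 ≤ q) {c21 : R2 F}
    (hc21 : d22 F q * c21 = X 1 * X 0 ^ (q ^ 2) - X 0 * X 1 ^ (q ^ 2)) :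
    c21 ≠ 0 ∧ lex.degree c21 = Finsupp.single 0 (q ^ 2 - q) :=
  lex_degree_eq_of_mul_X_mul_X_pow_sub (by decide) hq (Nat.le_self_pow two_ne_zero q) hc21

theorem lex_degree_of_d22s_mul (hq : 2 ≤ q) {c21s : R2 F}
    (hc21s : d22s F q * c21s = X 2 * X 3 ^ (q ^ 2) - X 3 * X 2 ^ (q ^ 2)) :
    c21s ≠ 0 ∧ lex.degree c21s = Finsupp.single 2 (q ^ 2 - q) := by
  refine lex_degree_eq_of_mul_X_mul_X_pow_sub (show (2 : Fin 4) < 3 by decide) hq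
    (Nat.le_self_pow two_ne_zero q) ?_
  rw [← neg_inj, ← neg_mul, ← d22s_eq_neg, hc21s, neg_sub]

theorem injective_sum_nsmul_lex_degrees (hq : 2 ≤ q) :
    Function.Injective fun e : ℕ × ℕ × ℕ × ℕ ↦
      e.1 • (Finsupp.single 1 1 + Finsupp.single 0 q) + e.2.1 • Finsupp.single 0 (q ^ 2 - q) +
        e.2.2.1 • (Finsupp.single 3 1 + Finsupp.single 2 q) +
        e.2.2.2 • Finsupp.single (2 : Fin 4) (q ^ 2 - q) := by
  have hq2 : 0 < q ^ 2 - q := Nat.sub_pos_of_lt (lt_self_pow₀ (by omega) one_lt_two)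
  rintro ⟨b, j, a, l⟩ ⟨b', j', a', l'⟩ he
  have hb : b = b' := by simpa using DFunLike.congr_fun he 1
  have ha : a = a' := by simpa using DFunLike.congr_fun he 3
  subst hb ha
  have hj : b * q + j * (q ^ 2 - q) = b * q + j' * (q ^ 2 - q) := by
    simpa using DFunLike.congr_fun he 0
  have hl : a * q + l * (q ^ 2 - q) = a * q + l' * (q ^ 2 - q) := by
    simpa using DFunLike.congr_fun he 2
  rw [Nat.eq_of_mul_eq_mul_right hq2 (Nat.add_left_cancel hj),
    Nat.eq_of_mul_eq_mul_right hq2 (Nat.add_left_cancel hl)]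

theorem linearIndependent_powProd4_generators (hq : 2 ≤ q) {c21 c21s : R2 F}
    (hc21 : d22 F q * c21 = X 1 * X 0 ^ (q ^ 2) - X 0 * X 1 ^ (q ^ 2))
    (hc21s : d22s F q * c21s = X 2 * X 3 ^ (q ^ 2) - X 3 * X 2 ^ (q ^ 2)) :
    LinearIndependent F (powProd4 (d22 F q) c21 (d22s F q) c21s) := by
  have hd22 : d22 F q ≠ 0 := lex.ne_zero_of_degree_ne_zero (by simp [lex_degree_d22 hq])
  have hd22s : d22s F q ≠ 0 := lex.ne_zero_of_degree_ne_zero (by simp [lex_degree_d22s hq])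
  obtain ⟨hc21_ne, hc21_deg⟩ := lex_degree_of_d22_mul hq hc21
  obtain ⟨hc21s_ne, hc21s_deg⟩ := lex_degree_of_d22s_mul hq hc21s
  refine lex.linearIndependent_of_injective_degree
    (fun e ↦ by simp [powProd4, hd22, hd22s, hc21_ne, hc21s_ne]) ?_
  simpa only [lex.degree_powProd4 hd22 hc21_ne hd22s hc21s_ne, lex_degree_d22 hq,
    lex_degree_d22s hq, hc21_deg, hc21s_deg] using injective_sum_nsmul_lex_degrees hq

end Generators

theorem stmt_14_general (q : ℕ) (hq : IsPrimePow q) (F : Type) [Field F]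
    (c21 c21s : R2 F)
    (hc21 : d22 F q * c21 = X 1 * X 0 ^ (q ^ 2) - X 0 * X 1 ^ (q ^ 2))
    (hc21s : d22s F q * c21s = X 2 * X 3 ^ (q ^ 2) - X 3 * X 2 ^ (q ^ 2))
    (T : Set (R2 F))
    (hT : T = {f | ∃ α β, α ≤ q - 2 ∧ β ≤ q - 2 ∧ f = d22s F q ^ α * d22 F q ^ β}) :
    T ⊆ (Algebra.adjoin F {d22 F q, c21, d22s F q, c21s} : Subalgebra F (R2 F)) ∧
    (∀ f ∈ (Algebra.adjoin F {d22 F q, c21, d22s F q, c21s} : Subalgebra F (R2 F)),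
      f ∈ Submodule.span
        (Algebra.adjoin F {d22 F q ^ (q - 1), c21, d22s F q ^ (q - 1), c21s}) T) ∧
    LinearIndependent (Algebra.adjoin F {d22 F q ^ (q - 1), c21, d22s F q ^ (q - 1), c21s})
      (fun b : T => (b : R2 F)) := by
  have hq2 : 2 ≤ q := hq.two_le
  have hT_range : T = Set.range fun p : Fin (q - 1) × Fin (q - 1) ↦
      d22s F q ^ (p.1 : ℕ) * d22 F q ^ (p.2 : ℕ) := by
    ext f
    rw [hT]
    constructor
    · rintro ⟨α, β, hα, hβ, rfl⟩
      exact ⟨(⟨α, by omega⟩, ⟨β, by omega⟩), rfl⟩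
    · rintro ⟨⟨α, β⟩, rfl⟩
      exact ⟨α, β, by omega, by omega, rfl⟩
  subst hT_range
  refine ⟨?_, fun f hf ↦ mem_span_pow_mul_pow_of_mem_adjoin _ _ _ _ _ (by omega) hf, ?_⟩
  · rintro _ ⟨p, rfl⟩
    exact mul_mem (pow_mem (Algebra.subset_adjoin (by simp)) _)
      (pow_mem (Algebra.subset_adjoin (by simp)) _)
  · have hgen := linearIndependent_powProd4_generators hq2 hc21 hc21s
    exact (linearIndependent_pow_mul_pow_of_linearIndependent_powProd4 _ _ _ _ _
      hgen).linearIndepOn_id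

/-- `𝒜 = F_q[d₂₂, c₂₁, d₂₂*, c₂₁*]` is a free module over
`ℬ = F_q[d₂₂^{q−1}, c₂₁, (d₂₂*)^{q−1}, c₂₁*]` with basis
`{(d₂₂*)^α d₂₂^β : 0 ≤ α, β ≤ q−2}`. -/
theorem stmt_14 (q : ℕ) (hq : IsPrimePow q) (F : Type) [Field F] [Fintype F]
    (hF : Fintype.card F = q)
    (c21 c21s : R2 F)
    (hc21 : d22 F q * c21 = X 1 * X 0 ^ (q ^ 2) - X 0 * X 1 ^ (q ^ 2))
    (hc21s : d22s F q * c21s = X 2 * X 3 ^ (q ^ 2) - X 3 * X 2 ^ (q ^ 2))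
    (T : Set (R2 F))
    (hT : T = {f | ∃ α β, α ≤ q - 2 ∧ β ≤ q - 2 ∧ f = d22s F q ^ α * d22 F q ^ β}) :
    T ⊆ (Algebra.adjoin F {d22 F q, c21, d22s F q, c21s} : Subalgebra F (R2 F)) ∧
    (∀ f ∈ (Algebra.adjoin F {d22 F q, c21, d22s F q, c21s} : Subalgebra F (R2 F)),
      f ∈ Submodule.span
        (Algebra.adjoin F {d22 F q ^ (q - 1), c21, d22s F q ^ (q - 1), c21s}) T) ∧
    LinearIndependent (Algebra.adjoin F {d22 F q ^ (q - 1), c21, d22s F q ^ (q - 1), c21s})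
      (fun b : T => (b : R2 F)) :=
  stmt_14_general q hq F c21 c21s hc21 hc21s T hT
end
end

section
/- Let q = 3. Then the polynomial h₁ does not belong to the F₃-subalgebra of R₂ generated by {d₂₂, c₂₁, d₂₂*, c₂₁*, u₁*, u₀, u₁}; in particular R₂^{SL₂(F₃)} is not generated by {d₂₂, c₂₁, d₂₂*, c₂₁*, u₁*, u₀, u₁} alone. -/
open MvPolynomial

noncomputable section

lemma cube_sub' {F : Type} [Field F] (h3 : (3 : R2 F) = 0) {s t : F} (hs : s^3 = s)
    (ht : t^3 = t) (u v : R2 F) :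
    (C s * u - C t * v)^3 = C s * u^3 - C t * v^3 := by
  have hs' : (C s : R2 F)^3 = C s := by rw [← C_pow, hs]
  have ht' : (C t : R2 F)^3 = C t := by rw [← C_pow, ht]
  linear_combination u^3 * hs' - v^3 * ht' + (C s * C t^2 * u * v^2 - C s^2 * C t * u^2 * v) * h3

lemma cube_add' {F : Type} [Field F] (h3 : (3 : R2 F) = 0) {s t : F} (hs : s^3 = s)
    (ht : t^3 = t) (u v : R2 F) :
    (C s * u + C t * v)^3 = C s * u^3 + C t * v^3 := by
  have hs' : (C s : R2 F)^3 = C s := by rw [← C_pow, hs]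
  have ht' : (C t : R2 F)^3 = C t := by rw [← C_pow, ht]
  linear_combination u^3 * hs' + v^3 * ht' + (C s * C t^2 * u * v^2 + C s^2 * C t * u^2 * v) * h3

/-- substitution x₂ ↦ x₁ -/
def psi1 (F : Type) [Field F] : R2 F →ₐ[F] R2 F := aeval ![X 0, X 0, X 2, X 3]
/-- substitution y₁ ↦ -y₂ -/
def psi2 (F : Type) [Field F] : R2 F →ₐ[F] R2 F := aeval ![X 0, X 1, -X 3, X 3]
/-- substitution x₁ ↦ -x₁ -/
def sgn0 (F : Type) [Field F] : R2 F →ₐ[F] R2 F := aeval ![-X 0, X 1, X 2, X 3]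

/-- for `q = 3`, the polynomial `h₁` does not lie in the `F₃`-subalgebra
generated by `{d₂₂, c₂₁, d₂₂*, c₂₁*, u₁*, u₀, u₁}`; in particular `R₂^{SL₂(F₃)}` is not
generated by these seven polynomials alone. -/
theorem stmt_19 (F : Type) [Field F] [Fintype F]
    (hF : Fintype.card F = 3)
    (c21 c21s : R2 F)
    (hc21 : d22 F 3 * c21 = X 1 * X 0 ^ (3 ^ 2) - X 0 * X 1 ^ (3 ^ 2))
    (hc21s : d22s F 3 * c21s = X 2 * X 3 ^ (3 ^ 2) - X 3 * X 2 ^ (3 ^ 2))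
    (h1 : R2 F)
    (hh1 : u0 F ^ 3 * h1 =
      u1 F 3 ^ 2 * d22s F 3 ^ 1 + u1s F 3 ^ 2 * d22 F 3 ^ 1) :
    h1 ∉ Algebra.adjoin F {d22 F 3, c21, d22s F 3, c21s, u1s F 3, u0 F, u1 F 3} ∧
    invariantRing (SL2 F) ≠
      Algebra.adjoin F {d22 F 3, c21, d22s F 3, c21s, u1s F 3, u0 F, u1 F 3} := by
  classical
  -- characteristic facts
  have h3F : (3 : F) = 0 := by
    have := FiniteField.cast_card_eq_zero F
    rw [hF] at this; exact_mod_cast this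
  have h3R : (3 : R2 F) = 0 := by
    rw [show (3 : R2 F) = C 3 from (map_ofNat C 3).symm, h3F, map_zero]
  have hcube : ∀ x : F, x ^ 3 = x := fun x => by rw [← hF]; exact FiniteField.pow_card x
  -- nonvanishing facts
  have hd22ne : d22 F 3 ≠ 0 := by
    intro h
    have := congrArg (aeval ![(Polynomial.X : Polynomial F), 1, 0, 0]) h
    simp [d22] at this
    have h3 := congrArg (fun p => Polynomial.coeff p 3) this
    simp [Polynomial.coeff_X] at h3
  have hd22sne : d22s F 3 ≠ 0 := by
    intro h
    have := congrArg (aeval ![(0 : Polynomial F), 0, 1, Polynomial.X]) h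
    simp [d22s] at this
    have h3 := congrArg (fun p => Polynomial.coeff p 3) this
    simp [Polynomial.coeff_X] at h3
  have hu0ne : u0 F ≠ 0 := by
    intro h
    have := congrArg (aeval ![(Polynomial.X : Polynomial F), 0, 1, 0]) h
    simp [u0] at this
  have hvne : (X 0 * X 2 + X 0 * X 3 : R2 F) ≠ 0 := by
    intro h
    have := congrArg (aeval ![(1 : Polynomial F), 0, Polynomial.X, 0]) h
    simp at this
  -- explicit formulas for c21 and c21s
  have hc21e : c21 = X 0^6 + X 0^4 * X 1^2 + X 0^2 * X 1^4 + X 1^6 := by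
    apply mul_left_cancel₀ hd22ne
    rw [hc21]; unfold d22; ring
  have hc21se : c21s = X 2^6 + X 2^4 * X 3^2 + X 2^2 * X 3^4 + X 3^6 := by
    apply mul_left_cancel₀ hd22sne
    rw [hc21s]; unfold d22s; ring
  -- image of h1 under psi1
  have hpsi1h1 : psi1 F h1 = X 0^3 * X 2 * X 3 * (X 3 - X 2) := by
    have hne : ((X 0 * X 2 + X 0 * X 3 : R2 F))^3 ≠ 0 := pow_ne_zero _ hvne
    have hthis := congrArg (psi1 F) hh1
    simp only [psi1, psi2, sgn0, u0, u1, u1s, d22, d22s, map_add, map_sub, map_mul, map_pow,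
          map_neg, aeval_X, Matrix.cons_val_zero, Matrix.cons_val_one, Matrix.head_cons,
          Matrix.cons_val_two, Matrix.cons_val_three, Matrix.tail_cons] at hthis
    show psi1 F h1 = _
    simp only [psi1]
    exact mul_left_cancel₀ hne (hthis.trans (by ring))
  have hpsih1 : psi2 F (psi1 F h1) = X 0^3 * X 3^3 := by
    rw [hpsi1h1]
    simp only [psi1, psi2, sgn0, u0, u1, u1s, d22, d22s, map_add, map_sub, map_mul, map_pow,
          map_neg, aeval_X, Matrix.cons_val_zero, Matrix.cons_val_one, Matrix.head_cons,
          Matrix.cons_val_two, Matrix.cons_val_three, Matrix.tail_cons]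
    linear_combination (-(X 0^3 * X 3^3) : R2 F) * h3R
  -- the key non-membership
  have key : h1 ∉ Algebra.adjoin F {d22 F 3, c21, d22s F 3, c21s, u1s F 3, u0 F, u1 F 3} := by
    intro hmem
    have hle : Algebra.adjoin F {d22 F 3, c21, d22s F 3, c21s, u1s F 3, u0 F, u1 F 3} ≤
        AlgHom.equalizer ((sgn0 F).comp ((psi2 F).comp (psi1 F))) ((psi2 F).comp (psi1 F)) := by
      apply Algebra.adjoin_le
      intro g hg
      simp only [Set.mem_insert_iff, Set.mem_singleton_iff] at hg
      have hmeq : ∀ f : R2 F, sgn0 F (psi2 F (psi1 F f)) = psi2 F (psi1 F f) →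
          f ∈ AlgHom.equalizer ((sgn0 F).comp ((psi2 F).comp (psi1 F)))
            ((psi2 F).comp (psi1 F)) := by
        intro f hf
        simpa [AlgHom.mem_equalizer, AlgHom.comp_apply] using hf
      rcases hg with rfl|rfl|rfl|rfl|rfl|rfl|rfl
      · apply hmeq; simp only [psi1, psi2, sgn0, u0, u1, u1s, d22, d22s, map_add, map_sub, map_mul, map_pow,
          map_neg, aeval_X, Matrix.cons_val_zero, Matrix.cons_val_one, Matrix.head_cons,
          Matrix.cons_val_two, Matrix.cons_val_three, Matrix.tail_cons]; try ring
      · apply hmeq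
        rw [hc21e]
        simp only [psi1, psi2, sgn0, u0, u1, u1s, d22, d22s, map_add, map_sub, map_mul, map_pow,
          map_neg, aeval_X, Matrix.cons_val_zero, Matrix.cons_val_one, Matrix.head_cons,
          Matrix.cons_val_two, Matrix.cons_val_three, Matrix.tail_cons]
        try ring
      · apply hmeq; simp only [psi1, psi2, sgn0, u0, u1, u1s, d22, d22s, map_add, map_sub, map_mul, map_pow,
          map_neg, aeval_X, Matrix.cons_val_zero, Matrix.cons_val_one, Matrix.head_cons,
          Matrix.cons_val_two, Matrix.cons_val_three, Matrix.tail_cons]; try ring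
      · apply hmeq
        rw [hc21se]
        simp only [psi1, psi2, sgn0, u0, u1, u1s, d22, d22s, map_add, map_sub, map_mul, map_pow,
          map_neg, aeval_X, Matrix.cons_val_zero, Matrix.cons_val_one, Matrix.head_cons,
          Matrix.cons_val_two, Matrix.cons_val_three, Matrix.tail_cons]
        try ring
      · apply hmeq; simp only [psi1, psi2, sgn0, u0, u1, u1s, d22, d22s, map_add, map_sub, map_mul, map_pow,
          map_neg, aeval_X, Matrix.cons_val_zero, Matrix.cons_val_one, Matrix.head_cons,
          Matrix.cons_val_two, Matrix.cons_val_three, Matrix.tail_cons]; try ring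
      · apply hmeq; simp only [psi1, psi2, sgn0, u0, u1, u1s, d22, d22s, map_add, map_sub, map_mul, map_pow,
          map_neg, aeval_X, Matrix.cons_val_zero, Matrix.cons_val_one, Matrix.head_cons,
          Matrix.cons_val_two, Matrix.cons_val_three, Matrix.tail_cons]; try ring
      · apply hmeq; simp only [psi1, psi2, sgn0, u0, u1, u1s, d22, d22s, map_add, map_sub, map_mul, map_pow,
          map_neg, aeval_X, Matrix.cons_val_zero, Matrix.cons_val_one, Matrix.head_cons,
          Matrix.cons_val_two, Matrix.cons_val_three, Matrix.tail_cons]; try ring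
    have hfix0 := hle hmem
    have hfix : sgn0 F (psi2 F (psi1 F h1)) = psi2 F (psi1 F h1) := by
      simpa [AlgHom.mem_equalizer, AlgHom.comp_apply] using hfix0
    rw [hpsih1] at hfix
    have hfix' : -(X 0^3 * X 3^3 : R2 F) = X 0^3 * X 3^3 := by
      have hs : sgn0 F (X 0^3 * X 3^3 : R2 F) = -(X 0^3 * X 3^3) := by
        simp only [psi1, psi2, sgn0, u0, u1, u1s, d22, d22s, map_add, map_sub, map_mul, map_pow,
          map_neg, aeval_X, Matrix.cons_val_zero, Matrix.cons_val_one, Matrix.head_cons,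
          Matrix.cons_val_two, Matrix.cons_val_three, Matrix.tail_cons]
        ring
      rw [← hs]; exact hfix
    have hm : (X 0^3 * X 3^3 : R2 F) ≠ 0 :=
      mul_ne_zero (pow_ne_zero _ (X_ne_zero _)) (pow_ne_zero _ (X_ne_zero _))
    exact hm (by linear_combination (X 0^3 * X 3^3 : R2 F) * h3R + hfix')
  refine ⟨key, fun heq => key ?_⟩
  rw [← heq]
  show ∀ A ∈ SL2 F, act A h1 = h1
  intro A hA
  have hdet : A.val.det = 1 := hA
  have hadbc : A.val 0 0 * A.val 1 1 - A.val 0 1 * A.val 1 0 = 1 := by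
    rw [← Matrix.det_fin_two]; exact hdet
  have hCd : (C (A.val 0 0) * C (A.val 1 1) - C (A.val 0 1) * C (A.val 1 0) : R2 F) = 1 := by
    rw [← C_mul, ← C_mul, ← C_sub, hadbc, C_1]
  have e0 : (C (A.val 1 1) * X 0 - C (A.val 1 0) * X 1 : R2 F)^3
      = C (A.val 1 1) * (X 0)^3 - C (A.val 1 0) * (X 1)^3 :=
    cube_sub' h3R (hcube _) (hcube _) _ _
  have e1 : (C (A.val 0 0) * X 1 - C (A.val 0 1) * X 0 : R2 F)^3
      = C (A.val 0 0) * (X 1)^3 - C (A.val 0 1) * (X 0)^3 :=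
    cube_sub' h3R (hcube _) (hcube _) _ _
  have e2 : (C (A.val 0 0) * X 2 + C (A.val 0 1) * X 3 : R2 F)^3
      = C (A.val 0 0) * (X 2)^3 + C (A.val 0 1) * (X 3)^3 :=
    cube_add' h3R (hcube _) (hcube _) _ _
  have e3 : (C (A.val 1 0) * X 2 + C (A.val 1 1) * X 3 : R2 F)^3
      = C (A.val 1 0) * (X 2)^3 + C (A.val 1 1) * (X 3)^3 :=
    cube_add' h3R (hcube _) (hcube _) _ _
  have hu0' : act A (u0 F) = u0 F := by
    simp only [act, u0, u1, u1s, d22, d22s, map_add, map_sub, map_mul, map_pow,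
      aeval_X, Matrix.cons_val_zero, Matrix.cons_val_one, Matrix.head_cons,
      Matrix.cons_val_two, Matrix.cons_val_three, Matrix.tail_cons, hdet, inv_one, one_mul]
    linear_combination (X 0 * X 2 + X 1 * X 3 : R2 F) * hCd
  have hu1' : act A (u1 F 3) = u1 F 3 := by
    simp only [act, u0, u1, u1s, d22, d22s, map_add, map_sub, map_mul, map_pow,
      aeval_X, Matrix.cons_val_zero, Matrix.cons_val_one, Matrix.head_cons,
      Matrix.cons_val_two, Matrix.cons_val_three, Matrix.tail_cons, hdet, inv_one, one_mul]
    linear_combination (C (A.val 0 0) * X 2 + C (A.val 0 1) * X 3 : R2 F) * e0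
      + (C (A.val 1 0) * X 2 + C (A.val 1 1) * X 3 : R2 F) * e1
      + (X 0^3 * X 2 + X 1^3 * X 3 : R2 F) * hCd
  have hu1s' : act A (u1s F 3) = u1s F 3 := by
    simp only [act, u0, u1, u1s, d22, d22s, map_add, map_sub, map_mul, map_pow,
      aeval_X, Matrix.cons_val_zero, Matrix.cons_val_one, Matrix.head_cons,
      Matrix.cons_val_two, Matrix.cons_val_three, Matrix.tail_cons, hdet, inv_one, one_mul]
    linear_combination (C (A.val 1 1) * X 0 - C (A.val 1 0) * X 1 : R2 F) * e2
      + (C (A.val 0 0) * X 1 - C (A.val 0 1) * X 0 : R2 F) * e3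
      + (X 0 * X 2^3 + X 1 * X 3^3 : R2 F) * hCd
  have hd22' : act A (d22 F 3) = d22 F 3 := by
    simp only [act, u0, u1, u1s, d22, d22s, map_add, map_sub, map_mul, map_pow,
      aeval_X, Matrix.cons_val_zero, Matrix.cons_val_one, Matrix.head_cons,
      Matrix.cons_val_two, Matrix.cons_val_three, Matrix.tail_cons, hdet, inv_one, one_mul]
    linear_combination (C (A.val 0 0) * X 1 - C (A.val 0 1) * X 0 : R2 F) * e0
      - (C (A.val 1 1) * X 0 - C (A.val 1 0) * X 1 : R2 F) * e1
      + (X 1 * X 0^3 - X 0 * X 1^3 : R2 F) * hCd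
  have hd22s' : act A (d22s F 3) = d22s F 3 := by
    simp only [act, u0, u1, u1s, d22, d22s, map_add, map_sub, map_mul, map_pow,
      aeval_X, Matrix.cons_val_zero, Matrix.cons_val_one, Matrix.head_cons,
      Matrix.cons_val_two, Matrix.cons_val_three, Matrix.tail_cons, hdet, inv_one, one_mul]
    linear_combination (C (A.val 0 0) * X 2 + C (A.val 0 1) * X 3 : R2 F) * e3
      - (C (A.val 1 0) * X 2 + C (A.val 1 1) * X 3 : R2 F) * e2
      + (X 2 * X 3^3 - X 3 * X 2^3 : R2 F) * hCd
  have hfa := congrArg (act A) hh1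
  simp only [map_add, map_mul, map_pow] at hfa
  rw [hu0', hu1', hu1s', hd22', hd22s'] at hfa
  exact mul_left_cancel₀ (pow_ne_zero 3 hu0ne) (hfa.trans hh1.symm)
end
end
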